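/- arXiv:1605.06297 — 2 statements merged into one kernel-verified Lean document; each statement's English description precedes it below -/
import Mathlib

section
/- The asymptotic density of {n ∈ ℕ : s₂(n+1) - s₂(n) = d} equals 2^{d-2} for every integer d ≤ 1, and equals 0 for d ≥ 2. In other words, μ₁(d) = 2^{d-2}·1_{d≤1}. -/
open Filter

/-- `s₂ n` is the number of 1's in the binary expansion of `n`. -/
def s2 (n : ℕ) : ℕ := (Nat.digits 2 n).sum

/-- The counting sequence whose limit is the asymptotic density
`μ_a(d)` of `{n : s₂(n+a) - s₂(n) = d}`. -/
noncomputable def densSeq (a : ℕ) (d : ℤ) (N : ℕ) : ℝ :=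
  (((Finset.range N).filter fun n => (s2 (n + a) : ℤ) - s2 n = d).card : ℝ) / N

open Topology Finset Nat

/-! Legendre's formula `ν₂(n!) = n - s₂(n)` applied to `(n+1)! = (n+1) · n!` gives
`s₂(n+1) - s₂(n) = 1 - ν₂(n+1)`. So the difference equals `1 - k` exactly when
`n + 1 ≡ 2^k [MOD 2^(k+1)]`, a residue class of density `2^-(k+1)`, and it never exceeds `1`. -/

lemma s2_add_padicValNat_factorial (n : ℕ) : s2 n + padicValNat 2 n ! = n := by
  have legendre := sub_one_mul_padicValNat_factorial (p := 2) n
  have hle := digit_sum_le 2 n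
  rw [s2]
  omega

lemma s2_succ_add_padicValNat (n : ℕ) :
    s2 (n + 1) + padicValNat 2 (n + 1) = s2 n + 1 := by
  have h := s2_add_padicValNat_factorial (n + 1)
  rw [factorial_succ, padicValNat.mul n.add_one_ne_zero (factorial_ne_zero n)] at h
  have := s2_add_padicValNat_factorial n
  omega

lemma padicValNat_two_eq_iff_modEq {m : ℕ} (hm : m ≠ 0) (k : ℕ) :
    padicValNat 2 m = k ↔ m ≡ 2 ^ k [MOD 2 ^ (k + 1)] := by
  have hdvd := padicValNat_dvd_iff_le (p := 2) (n := k) hm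
  have hdvd_succ := padicValNat_dvd_iff_le (p := 2) (n := k + 1) hm
  rw [dvd_iff_mod_eq_zero] at hdvd hdvd_succ
  rw [Nat.ModEq, Nat.mod_eq_of_lt (Nat.pow_lt_pow_right one_lt_two k.lt_succ_self)]
  have hsplit : m % 2 ^ (k + 1) = m % 2 ^ k + 2 ^ k * (m / 2 ^ k % 2) := by
    rw [pow_succ, Nat.mod_mul]
  have hlow := Nat.mod_lt m (Nat.two_pow_pos k)
  rcases Nat.mod_two_eq_zero_or_one (m / 2 ^ k) with hbit | hbit <;>
    rw [hbit] at hsplit <;> omega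

lemma s2_succ_sub_eq_iff_modEq (n k : ℕ) :
    (s2 (n + 1) : ℤ) - s2 n = 1 - k ↔ n ≡ 2 ^ k - 1 [MOD 2 ^ (k + 1)] := by
  have h := s2_succ_add_padicValNat n
  have hval : (s2 (n + 1) : ℤ) - s2 n = 1 - k ↔ padicValNat 2 (n + 1) = k := by omega
  rw [hval, padicValNat_two_eq_iff_modEq n.add_one_ne_zero,
    ← Nat.sub_add_cancel (Nat.one_le_two_pow (n := k))]
  exact ⟨Nat.ModEq.add_right_cancel' 1, Nat.ModEq.add_right 1⟩

lemma s2_succ_sub_le_one (n : ℕ) : (s2 (n + 1) : ℤ) - s2 n ≤ 1 := by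
  have := s2_succ_add_padicValNat n
  omega

lemma tendsto_div_atTop_of_abs_sub_mul_le {a : ℕ → ℝ} {x C : ℝ}
    (h : ∀ N : ℕ, |a N - N * x| ≤ C) :
    Tendsto (fun N : ℕ => a N / N) atTop (𝓝 x) := by
  have herr : Tendsto (fun N : ℕ => (a N - N * x) / N) atTop (𝓝 0) := by
    refine squeeze_zero_norm (fun N => ?_) (tendsto_const_div_atTop_nhds_zero_nat C)
    rw [norm_div, Real.norm_natCast]
    exact div_le_div_of_nonneg_right (h N) N.cast_nonneg
  have := herr.add_const x
  rw [zero_add] at this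
  refine this.congr' ?_
  filter_upwards [eventually_ne_atTop 0] with N hN
  field_simp
  ring

lemma tendsto_card_filter_modEq_div {M : ℕ} (hM : 0 < M) (r : ℕ) :
    Tendsto (fun N : ℕ => (#{n ∈ range N | n ≡ r [MOD M]} : ℝ) / N) atTop (𝓝 (1 / M)) := by
  refine tendsto_div_atTop_of_abs_sub_mul_le (C := 1) fun N => ?_
  rw [← count_eq_card_filter_range, count_modEq_card _ hM]
  have hMR : (0 : ℝ) < M := by exact_mod_cast hM
  have hN : (N : ℝ) * (1 / M) = (N / M : ℕ) + (N % M : ℕ) / M := by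
    have := Nat.div_add_mod N M
    field_simp
    exact_mod_cast this.symm
  have hrem_lt_one : (N % M : ℕ) / (M : ℝ) < 1 :=
    (div_lt_one hMR).mpr (by exact_mod_cast Nat.mod_lt N hM)
  have hrem_nonneg : 0 ≤ (N % M : ℕ) / (M : ℝ) := by positivity
  rw [hN, abs_le]
  split_ifs <;> push_cast <;> constructor <;> linarith

/-- μ₁(d) = 2^{d-2} for d ≤ 1, and 0 for d ≥ 2. -/
theorem mu_one_eq (d : ℤ) :
    Tendsto (densSeq 1 d) atTop
      (nhds (if d ≤ 1 then (2 : ℝ) ^ (d - 2) else 0)) := by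
  split_ifs with hd
  · obtain ⟨k, rfl⟩ : ∃ k : ℕ, d = 1 - k := ⟨(1 - d).toNat, by omega⟩
    have hseq : densSeq 1 (1 - k) =
        fun N : ℕ => (#{n ∈ range N | n ≡ 2 ^ k - 1 [MOD 2 ^ (k + 1)]} : ℝ) / N := by
      funext N
      simp only [densSeq, s2_succ_sub_eq_iff_modEq]
    have hlim : (2 : ℝ) ^ ((1 - k : ℤ) - 2) = 1 / (2 ^ (k + 1) : ℕ) := by
      rw [show (1 - k : ℤ) - 2 = -(k + 1 : ℕ) by push_cast; ring, zpow_neg, zpow_natCast]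
      simp
    rw [hseq, hlim]
    exact tendsto_card_filter_modEq_div (Nat.two_pow_pos _) _
  · have hempty (N : ℕ) : densSeq 1 d N = 0 := by
      rw [densSeq, filter_false_of_mem fun n _ => by have := s2_succ_sub_le_one n; omega]
      simp
    simpa only [funext hempty] using tendsto_const_nhds
end

section
/- Let a ∈ ℕ have binary expansion a = ∑_{k=0}^{n} a_k 2^k with a_n the leading digit, and set b_j = (-1)^{a_j+1}. Then the variance of μ_a equals (n+3)/2 - 1/2^{n+1} - (1/2)∑_{i=1}^{n}∑_{k=0}^{n-i} b_{k+i}b_k/2^{i} + ∑_{k=0}^{n} (b_k + b_{n-k})/2^{k+1}. -/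
open Filter Finset

/-!
Splitting `n` by parity gives `μ_{2a} = μ_a` and `μ_{2a+1}(d) = (μ_a(d-1) + μ_{a+1}(d+1))/2`,
while `μ_0 = δ_0` and `μ_1(1-j) = 2^{-(j+1)}`. By strong induction every `μ_a` has mass 1,
mean 0 and second moment `varSeq a`, where `varSeq (2a) = varSeq a` and
`varSeq (2a+1) = (varSeq a + varSeq (a+1))/2 + 1`. Appending a lowest binary digit `ε` to `c`
changes the pair `(V, D) = (varSeq c, varSeq (c+1) - varSeq c)` affinely, into
`(V + ε (D/2 + 1), D/2 - (2ε - 1))`, and the closed form of the statement solves this recursion.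
-/

open scoped Topology

lemma s2_two_mul (m : ℕ) : s2 (2 * m) = s2 m := by
  rcases Nat.eq_zero_or_pos m with rfl | hm
  · rfl
  · rw [s2, Nat.digits_def' one_lt_two (by omega)]
    simp [s2]

lemma s2_two_mul_add_one (m : ℕ) : s2 (2 * m + 1) = s2 m + 1 := by
  rw [s2, Nat.digits_def' one_lt_two (by omega)]
  simp [s2, Nat.mul_add_div]
  ring

def digitSumDiff (a n : ℕ) : ℤ := s2 (n + a) - s2 n

lemma digitSumDiff_zero (n : ℕ) : digitSumDiff 0 n = 0 := by
  simp [digitSumDiff]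

lemma digitSumDiff_two_mul_two_mul (a m : ℕ) :
    digitSumDiff (2 * a) (2 * m) = digitSumDiff a m := by
  simp only [digitSumDiff, ← mul_add, s2_two_mul]

lemma digitSumDiff_two_mul_two_mul_add_one (a m : ℕ) :
    digitSumDiff (2 * a) (2 * m + 1) = digitSumDiff a m := by
  rw [digitSumDiff, show 2 * m + 1 + 2 * a = 2 * (m + a) + 1 by ring, s2_two_mul_add_one,
    s2_two_mul_add_one, digitSumDiff]
  push_cast
  ring

lemma digitSumDiff_two_mul_add_one_two_mul (a m : ℕ) :
    digitSumDiff (2 * a + 1) (2 * m) = digitSumDiff a m + 1 := by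
  rw [digitSumDiff, show 2 * m + (2 * a + 1) = 2 * (m + a) + 1 by ring, s2_two_mul_add_one,
    s2_two_mul, digitSumDiff]
  push_cast
  ring

lemma digitSumDiff_two_mul_add_one_two_mul_add_one (a m : ℕ) :
    digitSumDiff (2 * a + 1) (2 * m + 1) = digitSumDiff (a + 1) m - 1 := by
  rw [digitSumDiff, show 2 * m + 1 + (2 * a + 1) = 2 * (m + (a + 1)) by ring, s2_two_mul,
    s2_two_mul_add_one, digitSumDiff]
  push_cast
  ring

lemma digitSumDiff_one_le (n : ℕ) : digitSumDiff 1 n ≤ 1 := by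
  induction n using Nat.strong_induction_on with
  | _ n ih =>
    obtain ⟨m, rfl | rfl⟩ := Nat.even_or_odd' n
    · simpa [digitSumDiff_zero] using (digitSumDiff_two_mul_add_one_two_mul 0 m).le
    · have h := digitSumDiff_two_mul_add_one_two_mul_add_one 0 m
      rw [mul_zero, zero_add] at h
      linarith [ih m (by omega)]

lemma Nat.count_two_mul (p : ℕ → Prop) [DecidablePred p] (q : ℕ) :
    count p (2 * q) = count (fun m => p (2 * m)) q + count (fun m => p (2 * m + 1)) q := by
  induction q with
  | zero => simp
  | succ q ih =>
    rw [show 2 * (q + 1) = 2 * q + 1 + 1 by ring, count_succ, count_succ, ih, count_succ,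
      count_succ]
    ring

lemma Nat.count_eq_count_two_mul_add_count_two_mul_add_one (p : ℕ → Prop) [DecidablePred p]
    (N : ℕ) : count p N =
      count (fun m => p (2 * m)) ((N + 1) / 2) + count (fun m => p (2 * m + 1)) (N / 2) := by
  obtain ⟨q, rfl | rfl⟩ := Nat.even_or_odd' N
  · rw [count_two_mul, show (2 * q + 1) / 2 = q by omega, show 2 * q / 2 = q by omega]
  · rw [count_succ, count_two_mul, show (2 * q + 1 + 1) / 2 = q + 1 by omega,
      show (2 * q + 1) / 2 = q by omega, count_succ]
    ring

lemma densSeq_eq_count (a : ℕ) (d : ℤ) (N : ℕ) :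
    densSeq a d N = Nat.count (fun n => digitSumDiff a n = d) N / N := by
  rw [densSeq, Nat.count_eq_card_filter_range]
  rfl

lemma count_eq_natCast_mul_densSeq (a : ℕ) (d : ℤ) (N : ℕ) :
    (Nat.count (fun n => digitSumDiff a n = d) N : ℝ) = N * densSeq a d N := by
  rcases N.eq_zero_or_pos with rfl | hN
  · simp
  · rw [densSeq_eq_count, mul_div_cancel₀ _ (by positivity)]

lemma densSeq_two_mul (a : ℕ) (d : ℤ) (N : ℕ) :
    densSeq (2 * a) d N = ((N + 1) / 2 : ℕ) / N * densSeq a d ((N + 1) / 2)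
      + (N / 2 : ℕ) / N * densSeq a d (N / 2) := by
  rw [densSeq_eq_count, Nat.count_eq_count_two_mul_add_count_two_mul_add_one]
  simp only [digitSumDiff_two_mul_two_mul, digitSumDiff_two_mul_two_mul_add_one, Nat.cast_add,
    count_eq_natCast_mul_densSeq]
  ring

lemma densSeq_two_mul_add_one (a : ℕ) (d : ℤ) (N : ℕ) :
    densSeq (2 * a + 1) d N = ((N + 1) / 2 : ℕ) / N * densSeq a (d - 1) ((N + 1) / 2)
      + (N / 2 : ℕ) / N * densSeq (a + 1) (d + 1) (N / 2) := by
  rw [densSeq_eq_count, Nat.count_eq_count_two_mul_add_count_two_mul_add_one]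
  simp only [digitSumDiff_two_mul_add_one_two_mul, digitSumDiff_two_mul_add_one_two_mul_add_one,
    ← eq_sub_iff_add_eq, sub_eq_iff_eq_add, Nat.cast_add, count_eq_natCast_mul_densSeq]
  ring

lemma tendsto_div_self_of_near_half {f : ℕ → ℕ}
    (hf : ∀ N, 2 * f N ≤ N + 1 ∧ N ≤ 2 * f N + 1) :
    Tendsto (fun N => (f N : ℝ) / N) atTop (𝓝 (1 / 2)) := by
  have h := tendsto_const_div_atTop_nhds_zero_nat (1 / 2 : ℝ)
  refine tendsto_of_tendsto_of_tendsto_of_le_of_le' (by simpa using tendsto_const_nhds.sub h)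
    (by simpa using tendsto_const_nhds.add h) ?_ ?_ <;>
  filter_upwards [eventually_gt_atTop 0] with N hN <;>
  have hN' : (0 : ℝ) < N := by exact_mod_cast hN
  · have : (N : ℝ) ≤ 2 * f N + 1 := by exact_mod_cast (hf N).2
    rw [le_div_iff₀ hN', sub_mul, div_mul_cancel₀ _ hN'.ne']
    linarith
  · have : (2 * f N : ℝ) ≤ N + 1 := by exact_mod_cast (hf N).1
    rw [div_le_iff₀ hN', add_mul, div_mul_cancel₀ _ hN'.ne']
    linarith

lemma tendsto_div_halves {u v : ℕ → ℝ} {L L' : ℝ} (hu : Tendsto u atTop (𝓝 L))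
    (hv : Tendsto v atTop (𝓝 L')) :
    Tendsto (fun N => ((N + 1) / 2 : ℕ) / N * u ((N + 1) / 2) + (N / 2 : ℕ) / N * v (N / 2))
      atTop (𝓝 ((L + L') / 2)) := by
  have hceil : Tendsto (fun N => (N + 1) / 2) atTop atTop :=
    tendsto_atTop_atTop.mpr fun b => ⟨2 * b, fun N hN => by omega⟩
  have hfloor : Tendsto (fun N => N / 2) atTop atTop :=
    tendsto_atTop_atTop.mpr fun b => ⟨2 * b, fun N hN => by omega⟩
  rw [add_div, div_eq_inv_mul L, div_eq_inv_mul L', ← one_div]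
  exact ((tendsto_div_self_of_near_half (f := fun N => (N + 1) / 2) fun N => by omega).mul
    (hu.comp hceil)).add
    ((tendsto_div_self_of_near_half (f := fun N => N / 2) fun N => by omega).mul
    (hv.comp hfloor))

lemma tendsto_densSeq_two_mul {a : ℕ} {d : ℤ} {L : ℝ} (h : Tendsto (densSeq a d) atTop (𝓝 L)) :
    Tendsto (densSeq (2 * a) d) atTop (𝓝 L) := by
  have := tendsto_div_halves h h
  rw [← two_mul, mul_div_cancel_left₀ L two_ne_zero] at this
  exact this.congr fun N => (densSeq_two_mul a d N).symm

lemma tendsto_densSeq_two_mul_add_one {a : ℕ} {d : ℤ} {L L' : ℝ}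
    (h : Tendsto (densSeq a (d - 1)) atTop (𝓝 L))
    (h' : Tendsto (densSeq (a + 1) (d + 1)) atTop (𝓝 L')) :
    Tendsto (densSeq (2 * a + 1) d) atTop (𝓝 ((L + L') / 2)) :=
  (tendsto_div_halves h h').congr fun N => (densSeq_two_mul_add_one a d N).symm

lemma tendsto_densSeq_zero (d : ℤ) :
    Tendsto (densSeq 0 d) atTop (𝓝 (if d = 0 then 1 else 0)) := by
  refine tendsto_const_nhds.congr' ?_
  filter_upwards [eventually_gt_atTop 0] with N hN
  have hN' : (N : ℝ) ≠ 0 := by positivity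
  by_cases hd : d = 0 <;> simp [densSeq_eq_count, digitSumDiff_zero, hd, eq_comm, hN']

lemma densSeq_one_of_two_le {d : ℤ} (hd : 2 ≤ d) (N : ℕ) : densSeq 1 d N = 0 := by
  rw [densSeq_eq_count, Nat.count_iff_forall_not.mpr fun n _ h => by
    linarith [digitSumDiff_one_le n], Nat.cast_zero, zero_div]

def HasMoments (ν : ℤ → ℝ) (m₀ m₁ m₂ : ℝ) : Prop :=
  HasSum ν m₀ ∧ HasSum (fun d : ℤ => (d : ℝ) * ν d) m₁ ∧
    HasSum (fun d : ℤ => (d : ℝ) ^ 2 * ν d) m₂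

namespace HasMoments

variable {ν ν' : ℤ → ℝ} {m₀ m₁ m₂ m₀' m₁' m₂' : ℝ}

lemma add (h : HasMoments ν m₀ m₁ m₂) (h' : HasMoments ν' m₀' m₁' m₂') :
    HasMoments (fun d => ν d + ν' d) (m₀ + m₀') (m₁ + m₁') (m₂ + m₂') := by
  obtain ⟨h₀, h₁, h₂⟩ := h
  obtain ⟨h₀', h₁', h₂'⟩ := h'
  simpa only [HasMoments, mul_add] using ⟨h₀.add h₀', h₁.add h₁', h₂.add h₂'⟩

lemma div_const (h : HasMoments ν m₀ m₁ m₂) (c : ℝ) :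
    HasMoments (fun d => ν d / c) (m₀ / c) (m₁ / c) (m₂ / c) := by
  obtain ⟨h₀, h₁, h₂⟩ := h
  refine ⟨h₀.div_const c, ?_, ?_⟩
  · simpa only [mul_div_assoc] using h₁.div_const c
  · simpa only [mul_div_assoc] using h₂.div_const c

lemma comp_sub (h : HasMoments ν m₀ m₁ m₂) (c : ℤ) :
    HasMoments (fun d => ν (d - c)) m₀ (m₁ + c * m₀) (m₂ + 2 * c * m₁ + c ^ 2 * m₀) := by
  obtain ⟨h₀, h₁, h₂⟩ := h
  have shift {f : ℤ → ℝ} {s : ℝ} (hf : HasSum (fun e => f (e + c) * ν e) s) :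
      HasSum (fun d => f d * ν (d - c)) s := by
    simpa [Function.comp_def] using (Equiv.subRight c).hasSum_iff.mpr hf
  refine ⟨(Equiv.subRight c).hasSum_iff.mpr h₀, shift ?_, shift ?_⟩
  · convert h₁.add (h₀.mul_left (c : ℝ)) using 1
    funext e
    push_cast
    ring
  · convert (h₂.add (h₁.mul_left (2 * c : ℝ))).add (h₀.mul_left (c ^ 2 : ℝ)) using 1
    funext e
    push_cast
    ring

end HasMoments

lemma hasMoments_ite_eq (c : ℤ) :
    HasMoments (fun d => if d = c then 1 else 0) 1 c (c ^ 2) := by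
  refine ⟨hasSum_ite_eq c 1, ?_, ?_⟩ <;>
  simpa using hasSum_single (f := fun d : ℤ => _ * if d = c then (1 : ℝ) else 0) c
    fun d hd => by simp [hd]

lemma hasSum_choose_mul_half_pow_succ (k : ℕ) :
    HasSum (fun j : ℕ => ((j + k).choose k : ℝ) * (1 / 2) ^ (j + 1)) (2 ^ k) := by
  have h := (hasSum_choose_mul_geometric_of_norm_lt_one (𝕜 := ℝ) k (r := 1 / 2)
    (by norm_num)).mul_left (1 / 2)
  rw [show (1 / 2 : ℝ) * (1 / (1 - 1 / 2) ^ (k + 1)) = 2 ^ k by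
    rw [show (1 : ℝ) - 1 / 2 = 1 / 2 by norm_num, one_div_pow, one_div_one_div, pow_succ]
    ring] at h
  exact h.congr_fun fun j => by ring

noncomputable def varSeq : ℕ → ℝ
  | 0 => 0
  | 1 => 2
  | a + 2 =>
    if h : (a + 2) % 2 = 0 then varSeq ((a + 2) / 2)
    else (varSeq ((a + 2) / 2) + varSeq ((a + 2) / 2 + 1)) / 2 + 1
decreasing_by all_goals omega

lemma varSeq_zero : varSeq 0 = 0 := by
  rw [varSeq]

lemma varSeq_one : varSeq 1 = 2 := by
  rw [varSeq]

lemma varSeq_two_mul (c : ℕ) : varSeq (2 * c) = varSeq c := by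
  rcases c with _ | c
  · rfl
  · rw [show 2 * (c + 1) = 2 * c + 2 by ring, varSeq, dif_pos (by omega)]
    congr 1
    omega

lemma varSeq_two_mul_add_one (c : ℕ) :
    varSeq (2 * c + 1) = (varSeq c + varSeq (c + 1)) / 2 + 1 := by
  rcases c with _ | c
  · norm_num [varSeq_zero, varSeq_one]
  · rw [show 2 * (c + 1) + 1 = 2 * c + 1 + 2 by ring, varSeq, dif_neg (by omega),
      show (2 * c + 1 + 2) / 2 = c + 1 by omega]

lemma varSeq_two_mul_add {ε : ℕ} (hε : ε = 0 ∨ ε = 1) (c : ℕ) :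
    varSeq (2 * c + ε) = varSeq c + ε * ((varSeq (c + 1) - varSeq c) / 2 + 1) ∧
      varSeq (2 * c + ε + 1) - varSeq (2 * c + ε)
        = (varSeq (c + 1) - varSeq c) / 2 - (2 * ε - 1) := by
  rcases hε with rfl | rfl
  · simp only [add_zero, varSeq_two_mul, varSeq_two_mul_add_one]
    constructor <;> push_cast <;> ring
  · rw [show 2 * c + 1 + 1 = 2 * (c + 1) by ring, varSeq_two_mul, varSeq_two_mul_add_one]
    constructor <;> push_cast <;> ring

section Density

variable {μ : ℕ → ℤ → ℝ} (hμ : ∀ a d, Tendsto (densSeq a d) atTop (𝓝 (μ a d)))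
include hμ

lemma mu_zero (d : ℤ) : μ 0 d = if d = 0 then 1 else 0 :=
  tendsto_nhds_unique (hμ 0 d) (tendsto_densSeq_zero d)

lemma mu_two_mul (a : ℕ) (d : ℤ) : μ (2 * a) d = μ a d :=
  tendsto_nhds_unique (hμ _ d) (tendsto_densSeq_two_mul (hμ a d))

lemma mu_two_mul_add_one (a : ℕ) (d : ℤ) :
    μ (2 * a + 1) d = (μ a (d - 1) + μ (a + 1) (d + 1)) / 2 :=
  tendsto_nhds_unique (hμ _ d) (tendsto_densSeq_two_mul_add_one (hμ a _) (hμ (a + 1) _))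

lemma mu_one_of_two_le {d : ℤ} (hd : 2 ≤ d) : μ 1 d = 0 :=
  tendsto_nhds_unique (hμ 1 d)
    (tendsto_const_nhds.congr fun N => (densSeq_one_of_two_le hd N).symm)

lemma mu_one_one_sub (j : ℕ) : μ 1 (1 - j) = (1 / 2) ^ (j + 1) := by
  have hrec (d : ℤ) : μ 1 d = (μ 0 (d - 1) + μ 1 (d + 1)) / 2 := by
    simpa using mu_two_mul_add_one hμ 0 d
  induction j with
  | zero =>
    rw [hrec, mu_zero hμ, mu_one_of_two_le hμ (by norm_num)]
    norm_num
  | succ j ih =>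
    rw [hrec, mu_zero hμ, if_neg (by omega),
      show (1 : ℤ) - ↑(j + 1) + 1 = 1 - j by push_cast; ring, ih]
    ring

lemma hasSum_mul_mu_one {g : ℤ → ℝ} {s : ℝ}
    (h : HasSum (fun j : ℕ => g (1 - j) * (1 / 2) ^ (j + 1)) s) :
    HasSum (fun d => g d * μ 1 d) s := by
  have hinj : Function.Injective fun j : ℕ => 1 - (j : ℤ) := fun i j h => by simpa using h
  refine (hinj.hasSum_iff fun d hd => ?_).mp
    (by simpa only [Function.comp_def, mu_one_one_sub hμ])
  rw [mu_one_of_two_le hμ, mul_zero]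
  by_contra! hlt
  exact hd ⟨(1 - d).toNat, show 1 - ((1 - d).toNat : ℤ) = d by omega⟩

lemma hasMoments_mu_one : HasMoments (μ 1) 1 0 2 := by
  have geom := hasSum_choose_mul_half_pow_succ
  refine ⟨by simpa using hasSum_mul_mu_one hμ (g := 1) (by simpa using geom 0),
    hasSum_mul_mu_one hμ ?_, hasSum_mul_mu_one hμ ?_⟩
  · have h := (((geom 0).mul_left 2).sub (geom 1)).congr_fun
      (g := fun j : ℕ => ((1 - j : ℤ) : ℝ) * (1 / 2) ^ (j + 1)) fun j => by
        simp only [Nat.choose_zero_right, Nat.choose_one_right]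
        push_cast
        ring
    rwa [show (2 : ℝ) * 2 ^ 0 - 2 ^ 1 = 0 by norm_num] at h
  · -- `(1 - j) ^ 2 = 2 * (j + 2).choose 2 - 5 * (j + 1) + 4`
    have h := ((((geom 2).mul_left 2).sub ((geom 1).mul_left 5)).add
      ((geom 0).mul_left 4)).congr_fun
      (g := fun j : ℕ => ((1 - j : ℤ) : ℝ) ^ 2 * (1 / 2) ^ (j + 1)) fun j => by
        simp only [Nat.choose_zero_right, Nat.choose_one_right, Nat.cast_choose_two]
        push_cast
        ring
    rwa [show (2 : ℝ) * 2 ^ 2 - 5 * 2 ^ 1 + 4 * 2 ^ 0 = 2 by norm_num] at h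

lemma hasMoments_mu (a : ℕ) : HasMoments (μ a) 1 0 (varSeq a) := by
  induction a using Nat.strong_induction_on with
  | _ a ih =>
    obtain ⟨c, rfl | rfl⟩ := Nat.even_or_odd' a
    · rcases c.eq_zero_or_pos with rfl | hc
      · simpa [funext (mu_zero hμ), varSeq_zero] using hasMoments_ite_eq 0
      · rw [funext (mu_two_mul hμ c), varSeq_two_mul]
        exact ih c (by omega)
    · rcases c.eq_zero_or_pos with rfl | hc
      · simpa [varSeq_one] using hasMoments_mu_one hμ
      · rw [varSeq_two_mul_add_one]
        convert (((ih c (by omega)).comp_sub 1).add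
          ((ih (c + 1) (by omega)).comp_sub (-1))).div_const 2 using 1
        · funext d
          rw [mu_two_mul_add_one hμ, sub_neg_eq_add]
        all_goals norm_num
        ring

end Density

noncomputable def varClosedForm (n : ℕ) (b : ℕ → ℝ) : ℝ :=
  ((n : ℝ) + 3) / 2 - 1 / 2 ^ (n + 1)
    - (1 / 2) * ∑ i ∈ Icc 1 n, ∑ k ∈ range (n - i + 1), b (k + i) * b k / 2 ^ i
    + ∑ k ∈ range (n + 1), (b k + b (n - k)) / 2 ^ (k + 1)

noncomputable def gapClosedForm (n : ℕ) (b : ℕ → ℝ) : ℝ :=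
  2 / 2 ^ (n + 1) - ∑ m ∈ range (n + 1), b m / 2 ^ m

lemma sum_Icc_sum_range_succ_eq (f : ℕ → ℕ → ℝ) (n : ℕ) :
    ∑ i ∈ Icc 1 (n + 1), ∑ k ∈ range (n + 1 - i + 1), f i k
      = ∑ i ∈ Icc 1 n, ∑ k ∈ range (n - i + 1), f i (k + 1)
        + ∑ m ∈ range (n + 1), f (m + 1) 0 := by
  simp only [sum_range_succ' (f _), sum_add_distrib]
  rw [sum_Icc_succ_top (by omega), Nat.sub_self, sum_range_zero, add_zero]
  congr 1
  · refine sum_congr rfl fun i hi => ?_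
    rw [show n + 1 - i = n - i + 1 by grind]
  · rw [← Ico_add_one_right_eq_Icc, sum_Ico_eq_sum_range]
    simp [add_comm]

lemma sum_div_two_pow_add (f : ℕ → ℝ) (n j : ℕ) :
    ∑ k ∈ range n, f k / 2 ^ (k + j) = (∑ k ∈ range n, f k / 2 ^ k) / 2 ^ j := by
  rw [sum_div]
  exact sum_congr rfl fun k _ => by rw [pow_add, div_div]

section ClosedForm

variable (b : ℕ → ℝ)

lemma varClosedForm_zero : varClosedForm 0 b = 1 + b 0 := by
  norm_num [varClosedForm]

lemma gapClosedForm_zero : gapClosedForm 0 b = 1 - b 0 := by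
  norm_num [gapClosedForm]

lemma gapClosedForm_succ (n : ℕ) :
    gapClosedForm (n + 1) b = gapClosedForm n (fun k => b (k + 1)) / 2 - b 0 := by
  rw [gapClosedForm, gapClosedForm, sum_range_succ', sum_div_two_pow_add (fun k => b (k + 1))]
  ring

lemma varClosedForm_succ (n : ℕ) :
    varClosedForm (n + 1) b = varClosedForm n (fun k => b (k + 1))
      + (b 0 + 1) / 2 * (gapClosedForm n (fun k => b (k + 1)) / 2 + 1) := by
  have hdouble : ∑ i ∈ Icc 1 (n + 1), ∑ k ∈ range (n + 1 - i + 1), b (k + i) * b k / 2 ^ i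
      = ∑ i ∈ Icc 1 n, ∑ k ∈ range (n - i + 1), b (k + i + 1) * b (k + 1) / 2 ^ i
        + b 0 / 2 * ∑ m ∈ range (n + 1), b (m + 1) / 2 ^ m := by
    rw [sum_Icc_sum_range_succ_eq, mul_sum]
    simp only [add_right_comm _ 1, zero_add, pow_succ]
    congr 1
    exact sum_congr rfl fun m _ => by ring
  have hsingle : ∑ k ∈ range (n + 1 + 1), (b k + b (n + 1 - k)) / 2 ^ (k + 1)
      = b 0 / 2 + (∑ m ∈ range (n + 1), b (m + 1) / 2 ^ m) / 4
        + ∑ k ∈ range (n + 1), b (n - k + 1) / 2 ^ (k + 1) + b 0 / 2 ^ (n + 2) := by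
    have hreflect : ∑ k ∈ range (n + 1), b (n + 1 - k) / 2 ^ (k + 1)
        = ∑ k ∈ range (n + 1), b (n - k + 1) / 2 ^ (k + 1) :=
      sum_congr rfl fun k hk => by rw [Nat.sub_add_comm (mem_range_succ_iff.mp hk)]
    rw [sum_congr rfl fun k _ => add_div _ _ _, sum_add_distrib, sum_range_succ',
      sum_range_succ (fun k => b (n + 1 - k) / _), Nat.sub_self,
      sum_congr rfl fun k _ => by rw [add_assoc k], sum_div_two_pow_add (fun k => b (k + 1)) _ 2,
      hreflect]
    ring
  have hsingle' : ∑ k ∈ range (n + 1), (b (k + 1) + b (n - k + 1)) / 2 ^ (k + 1)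
      = (∑ m ∈ range (n + 1), b (m + 1) / 2 ^ m) / 2
        + ∑ k ∈ range (n + 1), b (n - k + 1) / 2 ^ (k + 1) := by
    simp only [add_div, sum_add_distrib, sum_div_two_pow_add (fun k => b (k + 1)), pow_one]
  simp only [varClosedForm, gapClosedForm, hdouble, hsingle, hsingle']
  push_cast
  ring

end ClosedForm

lemma sum_range_succ_mul_two_pow (A : ℕ → ℕ) (n : ℕ) :
    ∑ k ∈ range (n + 1), A k * 2 ^ k = 2 * ∑ k ∈ range n, A (k + 1) * 2 ^ k + A 0 := by
  rw [sum_range_succ', mul_sum]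
  simp only [pow_succ, pow_zero]
  ring_nf

theorem varSeq_sum_digits (n : ℕ) {A : ℕ → ℕ} {b : ℕ → ℝ} (hA : ∀ k, A k = 0 ∨ A k = 1)
    (hb : ∀ j, b j = 2 * A j - 1) :
    varSeq (∑ k ∈ range (n + 1), A k * 2 ^ k) = varClosedForm n b ∧
      varSeq (∑ k ∈ range (n + 1), A k * 2 ^ k + 1) - varSeq (∑ k ∈ range (n + 1), A k * 2 ^ k)
        = gapClosedForm n b := by
  induction n generalizing A b with
  | zero =>
    obtain ⟨hval, hgap⟩ := varSeq_two_mul_add (hA 0) 0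
    rw [mul_zero, zero_add] at hval hgap
    rw [sum_range_one, pow_zero, mul_one, hgap, hval, varSeq_zero, varSeq_one, varClosedForm_zero,
      gapClosedForm_zero, hb 0]
    constructor <;> ring
  | succ n ih =>
    obtain ⟨ih₁, ih₂⟩ := ih (A := fun k => A (k + 1)) (b := fun k => b (k + 1))
      (fun k => hA _) (fun j => hb _)
    obtain ⟨hval, hgap⟩ := varSeq_two_mul_add (hA 0) (∑ k ∈ range (n + 1), A (k + 1) * 2 ^ k)
    rw [sum_range_succ_mul_two_pow, hgap, hval, ih₂, ih₁, varClosedForm_succ, gapClosedForm_succ,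
      hb 0]
    constructor <;> ring

theorem variance_formula_general (μ : ℕ → ℤ → ℝ)
    (hμ : ∀ a d, Tendsto (densSeq a d) atTop (nhds (μ a d)))
    (n : ℕ) (A : ℕ → ℕ) (hA : ∀ k, A k = 0 ∨ A k = 1)
    (a : ℕ) (ha : a = ∑ k ∈ range (n + 1), A k * 2 ^ k)
    (b : ℕ → ℝ) (hb : ∀ j, b j = (-1 : ℝ) ^ (A j + 1)) :
    HasSum (fun d : ℤ => (d : ℝ) ^ 2 * μ a d)
      (((n : ℝ) + 3) / 2 - 1 / 2 ^ (n + 1)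
        - (1 / 2) * ∑ i ∈ Icc 1 n, ∑ k ∈ range (n - i + 1), b (k + i) * b k / 2 ^ i
        + ∑ k ∈ range (n + 1), (b k + b (n - k)) / 2 ^ (k + 1)) := by
  have hb' (j : ℕ) : b j = 2 * A j - 1 := by
    rcases hA j with h | h <;> norm_num [hb, h]
  have h := (hasMoments_mu hμ a).2.2
  subst ha
  rwa [(varSeq_sum_digits n hA hb').1] at h

theorem variance_formula (μ : ℕ → ℤ → ℝ)
    (hμ : ∀ a d, Tendsto (densSeq a d) atTop (nhds (μ a d)))
    (n : ℕ) (A : ℕ → ℕ) (hA : ∀ k, A k = 0 ∨ A k = 1) (hlead : A n = 1)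
    (a : ℕ) (ha : a = ∑ k ∈ range (n + 1), A k * 2 ^ k)
    (b : ℕ → ℝ) (hb : ∀ j, b j = (-1 : ℝ) ^ (A j + 1)) :
    HasSum (fun d : ℤ => (d : ℝ) ^ 2 * μ a d)
      (((n : ℝ) + 3) / 2 - 1 / 2 ^ (n + 1)
        - (1 / 2) * ∑ i ∈ Icc 1 n, ∑ k ∈ range (n - i + 1), b (k + i) * b k / 2 ^ i
        + ∑ k ∈ range (n + 1), (b k + b (n - k)) / 2 ^ (k + 1)) :=
  variance_formula_general μ hμ n A hA a ha b hb
end
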